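/- Let H = {H_p}_{p∈Q} be a (not necessarily associative) Q-graded algebra in which each H_p is a (not necessarily coassociative) coalgebra and all multiplications and the unit are coalgebra maps. Then H is a Q-graded Hopf quasigroup if and only if: (1) each Δ_p is coassociative; (2) there is an almost-left-H-linear family β* with β*_{pq,q}∘β_{p,q} = id and β_{pq^{-1},q}∘β*_{p,q} = id, where β_{p,q}(h⊗g) = hg_{(1)}⊗g_{(2)}; and (3) there is an almost-right-H-linear family γ* with γ*_{p,pq}∘γ_{p,q} = id and γ_{p,p^{-1}q}∘γ*_{p,q} = id, where γ_{p,q}(h⊗g) = h_{(1)}⊗h_{(2)}g. -/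

import Mathlib

open TensorProduct

universe u v w

/-- A quasigroup: a set with product, identity `e`, and two-sided inverses satisfying
`p⁻¹(pq) = q` and `(qp)p⁻¹ = q`. -/
structure QuasigroupStruct (Q : Type u) where
  mul : Q → Q → Q
  one : Q
  inv : Q → Q
  mul_one : ∀ p, mul p one = p
  one_mul : ∀ p, mul one p = p
  inv_mul_cancel : ∀ p q, mul (inv p) (mul p q) = q
  mul_inv_cancel : ∀ p q, mul (mul q p) (inv p) = q

namespace QuasigroupStruct

variable {Q : Type u} (G : QuasigroupStruct Q)

lemma inv_mul_self (p : Q) : G.mul (G.inv p) p = G.one := by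
  have h := G.inv_mul_cancel p G.one
  rwa [G.mul_one] at h

lemma mul_inv_self (p : Q) : G.mul p (G.inv p) = G.one := by
  have h := G.mul_inv_cancel p G.one
  rwa [G.one_mul] at h

lemma inv_inv (p : Q) : G.inv (G.inv p) = p := by
  have h := G.inv_mul_cancel (G.inv p) p
  rw [G.inv_mul_self p] at h
  rwa [G.mul_one] at h

lemma mul_inv_cancel_left (p q : Q) : G.mul p (G.mul (G.inv p) q) = q := by
  have h := G.inv_mul_cancel (G.inv p) q
  rwa [G.inv_inv] at h

lemma inv_mul_cancel_right (p q : Q) : G.mul (G.mul q (G.inv p)) p = q := by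
  have h := G.mul_inv_cancel (G.inv p) q
  rwa [G.inv_inv] at h

lemma mul_inv_rev (p q : Q) : G.inv (G.mul p q) = G.mul (G.inv q) (G.inv p) := by
  have h1 : G.mul q (G.inv (G.mul p q)) = G.inv p := by
    have h := G.mul_inv_cancel (G.mul p q) (G.inv p)
    rwa [G.inv_mul_cancel p q] at h
  calc G.inv (G.mul p q)
      = G.mul (G.inv q) (G.mul q (G.inv (G.mul p q))) := (G.inv_mul_cancel q _).symm
    _ = G.mul (G.inv q) (G.inv p) := by rw [h1]

lemma inv_one : G.inv G.one = G.one := by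
  have h := G.inv_mul_cancel G.one G.one
  rwa [G.one_mul, G.mul_one] at h

end QuasigroupStruct

/-- Transport along an equality of grades, as a linear map. -/
def gcl {Q : Type u} {H : Q → Type w} {k : Type v} [CommSemiring k]
    [∀ p, AddCommMonoid (H p)] [∀ p, Module k (H p)] {p q : Q} (e : p = q) :
    H p →ₗ[k] H q := by subst e; exact LinearMap.id

/-- A `Q`-graded Hopf quasigroup: a family of coassociative counital coalgebras `H p`
with a (not necessarily associative) graded multiplication, unit and antipode family,
such that the multiplications and the unit are coalgebra maps and the antipode
satisfies the Hopf quasigroup axioms. -/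
structure GradedHopfQuasigroup (k : Type v) [CommRing k] {Q : Type u} (G : QuasigroupStruct Q)
    (H : Q → Type w) [∀ p, AddCommGroup (H p)] [∀ p, Module k (H p)]
    [∀ p, Coalgebra k (H p)] where
  mul : ∀ p q, H p →ₗ[k] H q →ₗ[k] H (G.mul p q)
  one : H G.one
  antipode : ∀ p, H p →ₗ[k] H (G.inv p)
  mul_one' : ∀ (p : Q) (h : H p), gcl (k := k) (G.mul_one p) ((mul p G.one h) one) = h
  one_mul' : ∀ (p : Q) (h : H p), gcl (k := k) (G.one_mul p) ((mul G.one p one) h) = h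
  comul_mul : ∀ (p q : Q) (h : H p) (g : H q),
    Coalgebra.comul (R := k) ((mul p q h) g) =
      (TensorProduct.map (TensorProduct.lift (mul p q)) (TensorProduct.lift (mul p q)))
        ((TensorProduct.tensorTensorTensorComm k (H p) (H p) (H q) (H q))
          (Coalgebra.comul h ⊗ₜ[k] Coalgebra.comul g))
  counit_mul : ∀ (p q : Q) (h : H p) (g : H q),
    Coalgebra.counit (R := k) ((mul p q h) g) =
      Coalgebra.counit (R := k) h * Coalgebra.counit (R := k) g
  comul_one : Coalgebra.comul (R := k) one = one ⊗ₜ[k] one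
  counit_one : Coalgebra.counit (R := k) one = 1
  /-- `S (h₁) (h₂ g) = ε(h) g` -/
  antipode_mul_left : ∀ (p q : Q) (h : H p) (g : H q),
    TensorProduct.lift
      (((mul (G.inv p) (G.mul p q)).comp (antipode p)).compl₂ ((mul p q).flip g))
      (Coalgebra.comul h)
      = gcl (k := k) (G.inv_mul_cancel p q).symm (Coalgebra.counit (R := k) h • g)
  /-- `h₁ (S (h₂) g) = ε(h) g` -/
  antipode_mul_left' : ∀ (p q : Q) (h : H p) (g : H q),
    TensorProduct.lift
      ((mul p (G.mul (G.inv p) q)).compl₂ (((mul (G.inv p) q).flip g).comp (antipode p)))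
      (Coalgebra.comul h)
      = gcl (k := k) (G.mul_inv_cancel_left p q).symm (Coalgebra.counit (R := k) h • g)
  /-- `(g S (h₁)) h₂ = ε(h) g` -/
  antipode_mul_right : ∀ (p q : Q) (h : H p) (g : H q),
    TensorProduct.lift
      ((mul (G.mul q (G.inv p)) p).comp ((mul q (G.inv p) g).comp (antipode p)))
      (Coalgebra.comul h)
      = gcl (k := k) (G.inv_mul_cancel_right p q).symm (Coalgebra.counit (R := k) h • g)
  /-- `(g h₁) S (h₂) = ε(h) g` -/
  antipode_mul_right' : ∀ (p q : Q) (h : H p) (g : H q),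
    TensorProduct.lift
      (((mul (G.mul q p) (G.inv p)).comp (mul q p g)).compl₂ (antipode p))
      (Coalgebra.comul h)
      = gcl (k := k) (G.mul_inv_cancel p q).symm (Coalgebra.counit (R := k) h • g)

variable {k : Type v} [Field k] {Q : Type u} {G : QuasigroupStruct Q}
  {H : Q → Type w} [∀ p, AddCommGroup (H p)] [∀ p, Module k (H p)]
  [∀ p, CoalgebraStruct k (H p)]

/-- A (not necessarily associative) `Q`-graded algebra whose components carry
(not necessarily coassociative) counital coalgebra structures, such that the
multiplications and the unit are coalgebra maps. -/
structure GradedQuasiBialgebra (k : Type v) [Field k] {Q : Type u}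
    (G : QuasigroupStruct Q) (H : Q → Type w)
    [∀ p, AddCommGroup (H p)] [∀ p, Module k (H p)]
    [∀ p, CoalgebraStruct k (H p)] where
  mul : ∀ p q, H p →ₗ[k] H q →ₗ[k] H (G.mul p q)
  one : H G.one
  mul_one' : ∀ (p : Q) (h : H p), gcl (k := k) (G.mul_one p) ((mul p G.one h) one) = h
  one_mul' : ∀ (p : Q) (h : H p), gcl (k := k) (G.one_mul p) ((mul G.one p one) h) = h
  comul_mul : ∀ (p q : Q) (h : H p) (g : H q),
    Coalgebra.comul (R := k) ((mul p q h) g) =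
      (TensorProduct.map (TensorProduct.lift (mul p q)) (TensorProduct.lift (mul p q)))
        ((TensorProduct.tensorTensorTensorComm k (H p) (H p) (H q) (H q))
          (Coalgebra.comul h ⊗ₜ[k] Coalgebra.comul g))
  counit_mul : ∀ (p q : Q) (h : H p) (g : H q),
    Coalgebra.counit (R := k) ((mul p q h) g) =
      Coalgebra.counit (R := k) h * Coalgebra.counit (R := k) g
  comul_one : Coalgebra.comul (R := k) one = one ⊗ₜ[k] one
  counit_one : Coalgebra.counit (R := k) one = 1
  counit_comul : ∀ (p : Q) (h : H p),
    (TensorProduct.lid k (H p))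
      ((LinearMap.rTensor (H p) (Coalgebra.counit (R := k))) (Coalgebra.comul h)) = h
  comul_counit : ∀ (p : Q) (h : H p),
    (TensorProduct.rid k (H p))
      ((LinearMap.lTensor (H p) (Coalgebra.counit (R := k))) (Coalgebra.comul h)) = h

variable (B : GradedQuasiBialgebra k G H)

/-- The right Galois map `β_{p,q}(h ⊗ g) = hg₁ ⊗ g₂`. -/
noncomputable def rightGalois (p q : Q) :
    H p ⊗[k] H q →ₗ[k] H (G.mul p q) ⊗[k] H q :=
  (TensorProduct.map (TensorProduct.lift (B.mul p q)) LinearMap.id) ∘ₗ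
    (TensorProduct.assoc k (H p) (H q) (H q)).symm.toLinearMap ∘ₗ
      (LinearMap.lTensor (H p) (Coalgebra.comul (R := k)))

/-- The left Galois map `γ_{p,q}(h ⊗ g) = h₁ ⊗ h₂g`. -/
noncomputable def leftGalois (p q : Q) :
    H p ⊗[k] H q →ₗ[k] H p ⊗[k] H (G.mul p q) :=
  (LinearMap.lTensor (H p) (TensorProduct.lift (B.mul p q))) ∘ₗ
    (TensorProduct.assoc k (H p) (H p) (H q)).toLinearMap ∘ₗ
      (LinearMap.rTensor (H q) (Coalgebra.comul (R := k)))

/-- Each `Δ_p` is coassociative. -/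
def Coassoc : Prop :=
  ∀ (p : Q) (h : H p),
    (TensorProduct.assoc k (H p) (H p) (H p))
        ((LinearMap.rTensor (H p) (Coalgebra.comul (R := k))) (Coalgebra.comul h))
      = (LinearMap.lTensor (H p) (Coalgebra.comul (R := k))) (Coalgebra.comul h)

/-- A family `φ_{p,q} : H_p ⊗ H_q → H_{pq⁻¹} ⊗ H_q` is almost left `H`-linear:
`φ_{p,q}(h ⊗ g) = (h ⊗ 1) φ_{e,q}(1 ⊗ g)`. -/
def AlmostLeftLinear
    (φ : ∀ p q : Q, H p ⊗[k] H q →ₗ[k] H (G.mul p (G.inv q)) ⊗[k] H q) : Prop :=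
  ∀ (p q : Q) (h : H p) (g : H q),
    φ p q (h ⊗ₜ[k] g)
      = (TensorProduct.map
          ((gcl (k := k) (show G.mul p (G.mul G.one (G.inv q)) = G.mul p (G.inv q)
              by rw [G.one_mul])) ∘ₗ (B.mul p (G.mul G.one (G.inv q)) h))
          ((gcl (k := k) (G.one_mul q)) ∘ₗ (B.mul G.one q B.one)))
        (φ G.one q (B.one ⊗ₜ[k] g))

/-- A family `φ_{p,q} : H_p ⊗ H_q → H_p ⊗ H_{p⁻¹q}` is almost right `H`-linear:
`φ_{p,q}(h ⊗ g) = φ_{p,e}(h ⊗ 1)(1 ⊗ g)`. -/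
def AlmostRightLinear
    (φ : ∀ p q : Q, H p ⊗[k] H q →ₗ[k] H p ⊗[k] H (G.mul (G.inv p) q)) : Prop :=
  ∀ (p q : Q) (h : H p) (g : H q),
    φ p q (h ⊗ₜ[k] g)
      = (TensorProduct.map
          ((gcl (k := k) (G.mul_one p)) ∘ₗ ((B.mul p G.one).flip B.one))
          ((gcl (k := k) (show G.mul (G.mul (G.inv p) G.one) q = G.mul (G.inv p) q
              by rw [G.mul_one])) ∘ₗ ((B.mul (G.mul (G.inv p) G.one) q).flip g)))
        (φ p G.one (h ⊗ₜ[k] B.one))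

/-- `H` is a `Q`-graded Hopf quasigroup: comultiplications are coassociative and
there is an antipode family satisfying the four Hopf quasigroup identities. -/
def IsGradedHopfQuasigroup : Prop :=
  Coassoc (k := k) (H := H) ∧
  ∃ S : ∀ p : Q, H p →ₗ[k] H (G.inv p),
    (∀ (p q : Q) (h : H p) (g : H q),
      TensorProduct.lift
        (((B.mul (G.inv p) (G.mul p q)).comp (S p)).compl₂ ((B.mul p q).flip g))
        (Coalgebra.comul h)
        = gcl (k := k) (G.inv_mul_cancel p q).symm (Coalgebra.counit (R := k) h • g)) ∧
    (∀ (p q : Q) (h : H p) (g : H q),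
      TensorProduct.lift
        ((B.mul p (G.mul (G.inv p) q)).compl₂ (((B.mul (G.inv p) q).flip g).comp (S p)))
        (Coalgebra.comul h)
        = gcl (k := k) (G.mul_inv_cancel_left p q).symm (Coalgebra.counit (R := k) h • g)) ∧
    (∀ (p q : Q) (h : H p) (g : H q),
      TensorProduct.lift
        ((B.mul (G.mul q (G.inv p)) p).comp ((B.mul q (G.inv p) g).comp (S p)))
        (Coalgebra.comul h)
        = gcl (k := k) (G.inv_mul_cancel_right p q).symm (Coalgebra.counit (R := k) h • g)) ∧
    (∀ (p q : Q) (h : H p) (g : H q),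
      TensorProduct.lift
        (((B.mul (G.mul q p) (G.inv p)).comp (B.mul q p g)).compl₂ (S p))
        (Coalgebra.comul h)
        = gcl (k := k) (G.mul_inv_cancel p q).symm (Coalgebra.counit (R := k) h • g))

/-!
Given an antipode `S`, the inverses are `β*(h ⊗ g) = h S(g₁) ⊗ g₂` and
`γ*(h ⊗ g) = h₁ ⊗ S(h₂) g`. By coassociativity each composite of one of them with a Galois map
has the shape `x ⊗ g ↦ Φ(g₁) ⊗ g₂` (or its mirror image), and such a map is the identity up to
regrading exactly when `Φ = ε(-) x`; these four conditions are the four antipode identities.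

Conversely, `β` is a map of cofree right comodules for the coaction `id ⊗ Δ`, and since it is
injective so is its inverse `β*`. A comodule map out of `H_e ⊗ H_q` is determined by `id ⊗ ε` of
its values, so `β*(1 ⊗ g) = S(g₁) ⊗ g₂` with `S = (id ⊗ ε) β*(1 ⊗ -)`, and almost left linearity
gives `β* = β*_S`. Likewise `γ* = γ*_T`, and evaluating `(T(h₁) h₂) S(h₃)` in two ways shows
`T = S`.
-/

open Coalgebra (comul counit)
open LinearMap (lTensor rTensor)

section CofreeComodule

variable {R C M N P : Type*} [CommSemiring R] [AddCommMonoid C] [AddCommMonoid M]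
  [AddCommMonoid N] [AddCommMonoid P] [Module R C] [Module R M] [Module R N] [Module R P]
  [CoalgebraStruct R C]

variable (R C M) in
noncomputable def rightCoaction : M ⊗[R] C →ₗ[R] (M ⊗[R] C) ⊗[R] C :=
  (TensorProduct.assoc R M C C).symm.toLinearMap ∘ₗ lTensor M (comul (R := R))

variable (R C M) in
noncomputable def leftCoaction : C ⊗[R] M →ₗ[R] C ⊗[R] (C ⊗[R] M) :=
  (TensorProduct.assoc R C C M).toLinearMap ∘ₗ rTensor M (comul (R := R))

/-- `m ⊗ c ↦ φ m c₁ ⊗ c₂`. -/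
noncomputable def rightGaloisMap (φ : M →ₗ[R] C →ₗ[R] N) : M ⊗[R] C →ₗ[R] N ⊗[R] C :=
  TensorProduct.map (TensorProduct.lift φ) LinearMap.id ∘ₗ rightCoaction R C M

/-- `c ⊗ m ↦ c₁ ⊗ φ c₂ m`. -/
noncomputable def leftGaloisMap (φ : C →ₗ[R] M →ₗ[R] N) : C ⊗[R] M →ₗ[R] C ⊗[R] N :=
  lTensor C (TensorProduct.lift φ) ∘ₗ leftCoaction R C M

theorem rightCoaction_tmul (m : M) (c : C) :
    rightCoaction R C M (m ⊗ₜ c) = rTensor C (TensorProduct.mk R M C m) (comul c) := by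
  simp only [rightCoaction, LinearMap.comp_apply, LinearMap.lTensor_tmul, LinearEquiv.coe_coe]
  induction comul (R := R) c using TensorProduct.induction_on with
  | zero => simp
  | tmul a b => simp
  | add u v hu hv => simp [tmul_add, hu, hv]

theorem leftCoaction_tmul (c : C) (m : M) :
    leftCoaction R C M (c ⊗ₜ m) = lTensor C ((TensorProduct.mk R C M).flip m) (comul c) := by
  simp only [leftCoaction, LinearMap.comp_apply, LinearMap.rTensor_tmul, LinearEquiv.coe_coe]
  induction comul (R := R) c using TensorProduct.induction_on with
  | zero => simp
  | tmul a b => simp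
  | add u v hu hv => simp [add_tmul, hu, hv]

theorem rightGaloisMap_tmul (φ : M →ₗ[R] C →ₗ[R] N) (m : M) (c : C) :
    rightGaloisMap φ (m ⊗ₜ c) = rTensor C (φ m) (comul c) := by
  rw [rightGaloisMap, LinearMap.comp_apply, rightCoaction_tmul, LinearMap.map_rTensor]
  rfl

theorem leftGaloisMap_tmul (φ : C →ₗ[R] M →ₗ[R] N) (c : C) (m : M) :
    leftGaloisMap φ (c ⊗ₜ m) = lTensor C (φ.flip m) (comul c) := by
  rw [leftGaloisMap, LinearMap.comp_apply, leftCoaction_tmul, ← LinearMap.lTensor_comp_apply]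
  rfl

theorem rightGaloisMap_comp_mk (φ : M →ₗ[R] C →ₗ[R] N) (m : M) :
    rightGaloisMap φ ∘ₗ TensorProduct.mk R M C m = rTensor C (φ m) ∘ₗ comul :=
  LinearMap.ext (rightGaloisMap_tmul φ m)

theorem leftGaloisMap_comp_mk_flip (φ : C →ₗ[R] M →ₗ[R] N) (m : M) :
    leftGaloisMap φ ∘ₗ (TensorProduct.mk R C M).flip m = lTensor C (φ.flip m) ∘ₗ comul :=
  LinearMap.ext fun c => leftGaloisMap_tmul φ c m

theorem rightCoaction_rTensor (f : M →ₗ[R] N) (x : M ⊗[R] C) :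
    rightCoaction R C N (rTensor C f x) = rTensor C (rTensor C f) (rightCoaction R C M x) := by
  induction x using TensorProduct.induction_on with
  | zero => simp
  | tmul m c =>
    rw [LinearMap.rTensor_tmul, rightCoaction_tmul, rightCoaction_tmul,
      ← LinearMap.rTensor_comp_apply]
    rfl
  | add u v hu hv => simp only [map_add, hu, hv]

theorem leftCoaction_lTensor (f : M →ₗ[R] N) (x : C ⊗[R] M) :
    leftCoaction R C N (lTensor C f x) = lTensor C (lTensor C f) (leftCoaction R C M x) := by
  induction x using TensorProduct.induction_on with
  | zero => simp
  | tmul c m =>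
    rw [LinearMap.lTensor_tmul, leftCoaction_tmul, leftCoaction_tmul,
      ← LinearMap.lTensor_comp_apply]
    rfl
  | add u v hu hv => simp only [map_add, hu, hv]

end CofreeComodule

section Counit

variable {R C M : Type*} [CommSemiring R] [AddCommMonoid C] [AddCommMonoid M]
  [Module R C] [Module R M] [CoalgebraStruct R C]

theorem rid_lTensor_counit_rTensor_comul
    (hr : ∀ c : C, TensorProduct.rid R C (lTensor C counit (comul c)) = c)
    (f : C →ₗ[R] M) (c : C) :
    TensorProduct.rid R M (lTensor M counit (rTensor C f (comul c))) = f c := by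
  conv_rhs => rw [← hr c]
  induction comul (R := R) c using TensorProduct.induction_on with
  | zero => simp
  | tmul a b => simp
  | add u v hu hv => simp only [map_add, hu, hv]

theorem lid_rTensor_counit_lTensor_comul
    (hl : ∀ c : C, TensorProduct.lid R C (rTensor C counit (comul c)) = c)
    (f : C →ₗ[R] M) (c : C) :
    TensorProduct.lid R M (rTensor M counit (lTensor C f (comul c))) = f c := by
  conv_rhs => rw [← hl c]
  induction comul (R := R) c using TensorProduct.induction_on with
  | zero => simp
  | tmul a b => simp
  | add u v hu hv => simp only [map_add, hu, hv]

theorem rTensor_smulRight_counit_comul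
    (hl : ∀ c : C, TensorProduct.lid R C (rTensor C counit (comul c)) = c)
    (m : M) (c : C) :
    rTensor C ((counit (R := R)).smulRight m) (comul c) = m ⊗ₜ c := by
  conv_rhs => rw [← hl c]
  induction comul (R := R) c using TensorProduct.induction_on with
  | zero => simp
  | tmul a b => simp [TensorProduct.smul_tmul', TensorProduct.tmul_smul]
  | add u v hu hv => simp only [map_add, tmul_add, hu, hv]

theorem lTensor_smulRight_counit_comul
    (hr : ∀ c : C, TensorProduct.rid R C (lTensor C counit (comul c)) = c)
    (m : M) (c : C) :
    lTensor C ((counit (R := R)).smulRight m) (comul c) = c ⊗ₜ m := by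
  conv_rhs => rw [← hr c]
  induction comul (R := R) c using TensorProduct.induction_on with
  | zero => simp
  | tmul a b => simp [TensorProduct.smul_tmul']
  | add u v hu hv => simp only [map_add, add_tmul, hu, hv]

theorem rTensor_comul_eq_tmul_iff
    (hl : ∀ c : C, TensorProduct.lid R C (rTensor C counit (comul c)) = c)
    (hr : ∀ c : C, TensorProduct.rid R C (lTensor C counit (comul c)) = c)
    (f : C →ₗ[R] M) (m : M) :
    (∀ c, rTensor C f (comul c) = m ⊗ₜ c) ↔ ∀ c, f c = counit (R := R) c • m := by
  refine ⟨fun h c => ?_, fun h c => ?_⟩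
  · simpa [rid_lTensor_counit_rTensor_comul hr] using
      congrArg (fun y => TensorProduct.rid R M (lTensor M counit y)) (h c)
  · rw [show f = (counit (R := R)).smulRight m from LinearMap.ext h,
      rTensor_smulRight_counit_comul hl]

theorem lTensor_comul_eq_tmul_iff
    (hl : ∀ c : C, TensorProduct.lid R C (rTensor C counit (comul c)) = c)
    (hr : ∀ c : C, TensorProduct.rid R C (lTensor C counit (comul c)) = c)
    (f : C →ₗ[R] M) (m : M) :
    (∀ c, lTensor C f (comul c) = c ⊗ₜ m) ↔ ∀ c, f c = counit (R := R) c • m := by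
  refine ⟨fun h c => ?_, fun h c => ?_⟩
  · simpa [lid_rTensor_counit_lTensor_comul hl] using
      congrArg (fun y => TensorProduct.lid R M (rTensor M counit y)) (h c)
  · rw [show f = (counit (R := R)).smulRight m from LinearMap.ext h,
      lTensor_smulRight_counit_comul hr]

theorem rTensor_counit_rightCoaction
    (hl : ∀ c : C, TensorProduct.lid R C (rTensor C counit (comul c)) = c)
    (x : M ⊗[R] C) :
    rTensor C ((TensorProduct.rid R M).toLinearMap ∘ₗ lTensor M counit)
      (rightCoaction R C M x) = x := by
  induction x using TensorProduct.induction_on with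
  | zero => simp
  | tmul m c =>
    rw [rightCoaction_tmul, ← LinearMap.rTensor_comp_apply]
    exact rTensor_smulRight_counit_comul hl m c
  | add u v hu hv => simp only [map_add, hu, hv]

theorem lTensor_counit_leftCoaction
    (hr : ∀ c : C, TensorProduct.rid R C (lTensor C counit (comul c)) = c)
    (x : C ⊗[R] M) :
    lTensor C ((TensorProduct.lid R M).toLinearMap ∘ₗ rTensor M counit)
      (leftCoaction R C M x) = x := by
  induction x using TensorProduct.induction_on with
  | zero => simp
  | tmul c m =>
    rw [leftCoaction_tmul, ← LinearMap.lTensor_comp_apply]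
    exact lTensor_smulRight_counit_comul hr m c
  | add u v hu hv => simp only [map_add, hu, hv]

end Counit

section ComoduleHom

variable {R C M N P : Type*} [CommSemiring R] [AddCommMonoid C] [AddCommMonoid M]
  [AddCommMonoid N] [AddCommMonoid P] [Module R C] [Module R M] [Module R N] [Module R P]
  [CoalgebraStruct R C]

def IsRightComoduleHom (F : M ⊗[R] C →ₗ[R] N ⊗[R] C) : Prop :=
  ∀ x, rightCoaction R C N (F x) = rTensor C F (rightCoaction R C M x)

def IsLeftComoduleHom (F : C ⊗[R] M →ₗ[R] C ⊗[R] N) : Prop :=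
  ∀ x, leftCoaction R C N (F x) = lTensor C F (leftCoaction R C M x)

theorem IsRightComoduleHom.of_comp_eq_rTensor {β : N ⊗[R] C →ₗ[R] P ⊗[R] C}
    {F : M ⊗[R] C →ₗ[R] N ⊗[R] C} {τ : M →ₗ[R] P} (hβ : IsRightComoduleHom β)
    (hβF : ∀ x, β (F x) = rTensor C τ x)
    (hinj : Function.Injective (rTensor C β)) : IsRightComoduleHom F := by
  intro x
  apply hinj
  rw [← hβ, hβF, rightCoaction_rTensor, ← LinearMap.rTensor_comp_apply,
    show β ∘ₗ F = rTensor C τ from LinearMap.ext hβF]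

theorem IsLeftComoduleHom.of_comp_eq_lTensor {β : C ⊗[R] N →ₗ[R] C ⊗[R] P}
    {F : C ⊗[R] M →ₗ[R] C ⊗[R] N} {τ : M →ₗ[R] P} (hβ : IsLeftComoduleHom β)
    (hβF : ∀ x, β (F x) = lTensor C τ x)
    (hinj : Function.Injective (lTensor C β)) : IsLeftComoduleHom F := by
  intro x
  apply hinj
  rw [← hβ, hβF, leftCoaction_lTensor, ← LinearMap.lTensor_comp_apply,
    show β ∘ₗ F = lTensor C τ from LinearMap.ext hβF]

theorem IsRightComoduleHom.apply_tmul
    (hl : ∀ c : C, TensorProduct.lid R C (rTensor C counit (comul c)) = c)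
    {F : M ⊗[R] C →ₗ[R] N ⊗[R] C} (hF : IsRightComoduleHom F) (m : M) (c : C) :
    F (m ⊗ₜ c) = rTensor C ((TensorProduct.rid R N).toLinearMap ∘ₗ lTensor N counit ∘ₗ F ∘ₗ
      TensorProduct.mk R M C m) (comul c) := by
  rw [← rTensor_counit_rightCoaction hl (F (m ⊗ₜ c)), hF, rightCoaction_tmul,
    ← LinearMap.rTensor_comp_apply, ← LinearMap.rTensor_comp_apply]
  rfl

theorem IsLeftComoduleHom.apply_tmul
    (hr : ∀ c : C, TensorProduct.rid R C (lTensor C counit (comul c)) = c)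
    {F : C ⊗[R] M →ₗ[R] C ⊗[R] N} (hF : IsLeftComoduleHom F) (c : C) (m : M) :
    F (c ⊗ₜ m) = lTensor C ((TensorProduct.lid R N).toLinearMap ∘ₗ rTensor N counit ∘ₗ F ∘ₗ
      (TensorProduct.mk R C M).flip m) (comul c) := by
  rw [← lTensor_counit_leftCoaction hr (F (c ⊗ₜ m)), hF, leftCoaction_tmul,
    ← LinearMap.lTensor_comp_apply, ← LinearMap.lTensor_comp_apply]
  rfl

end ComoduleHom

section Coassoc

variable {R C M N P : Type*} [CommSemiring R] [AddCommMonoid C] [AddCommMonoid M]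
  [AddCommMonoid N] [AddCommMonoid P] [Module R C] [Module R M] [Module R N] [Module R P]
  [CoalgebraStruct R C]
  (hΔ : ∀ c : C,
    TensorProduct.assoc R C C C (rTensor C comul (comul c)) = lTensor C comul (comul c))
include hΔ

theorem rightCoaction_comul (c : C) :
    rightCoaction R C C (comul c) = rTensor C comul (comul c) := by
  rw [rightCoaction, LinearMap.comp_apply, ← hΔ c]
  exact (TensorProduct.assoc R C C C).symm_apply_apply _

theorem leftCoaction_comul (c : C) :
    leftCoaction R C C (comul c) = lTensor C comul (comul c) :=
  hΔ c

theorem isRightComoduleHom_rightGaloisMap (φ : M →ₗ[R] C →ₗ[R] N) :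
    IsRightComoduleHom (rightGaloisMap φ) := by
  intro x
  induction x using TensorProduct.induction_on with
  | zero => simp
  | tmul m c =>
    rw [rightGaloisMap_tmul, rightCoaction_rTensor, rightCoaction_comul hΔ, rightCoaction_tmul,
      ← LinearMap.rTensor_comp_apply, ← LinearMap.rTensor_comp_apply,
      rightGaloisMap_comp_mk]
  | add u v hu hv => simp only [map_add, hu, hv]

theorem isLeftComoduleHom_leftGaloisMap (φ : C →ₗ[R] M →ₗ[R] N) :
    IsLeftComoduleHom (leftGaloisMap φ) := by
  intro x
  induction x using TensorProduct.induction_on with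
  | zero => simp
  | tmul c m =>
    rw [leftGaloisMap_tmul, leftCoaction_lTensor, leftCoaction_comul hΔ, leftCoaction_tmul,
      ← LinearMap.lTensor_comp_apply, ← LinearMap.lTensor_comp_apply,
      leftGaloisMap_comp_mk_flip]
  | add u v hu hv => simp only [map_add, hu, hv]

theorem rightGaloisMap_rightGaloisMap_tmul (φ : M →ₗ[R] C →ₗ[R] N) (ψ : N →ₗ[R] C →ₗ[R] P)
    (m : M) (c : C) :
    rightGaloisMap ψ (rightGaloisMap φ (m ⊗ₜ c))
      = rTensor C (TensorProduct.lift (ψ ∘ₗ φ m) ∘ₗ comul) (comul c) := by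
  rw [rightGaloisMap, LinearMap.comp_apply, isRightComoduleHom_rightGaloisMap hΔ,
    rightCoaction_tmul, LinearMap.map_rTensor, LinearMap.map_rTensor, LinearMap.comp_assoc,
    rightGaloisMap_comp_mk, ← LinearMap.comp_assoc,
    show TensorProduct.lift ψ ∘ₗ rTensor C (φ m) = TensorProduct.lift (ψ ∘ₗ φ m) from
      TensorProduct.ext' fun _ _ => rfl]
  rfl

theorem leftGaloisMap_leftGaloisMap_tmul (φ : C →ₗ[R] M →ₗ[R] N) (ψ : C →ₗ[R] N →ₗ[R] P)
    (c : C) (m : M) :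
    leftGaloisMap ψ (leftGaloisMap φ (c ⊗ₜ m))
      = lTensor C (TensorProduct.lift (ψ.compl₂ (φ.flip m)) ∘ₗ comul) (comul c) := by
  rw [leftGaloisMap, LinearMap.comp_apply, isLeftComoduleHom_leftGaloisMap hΔ, leftCoaction_tmul,
    ← LinearMap.lTensor_comp_apply, ← LinearMap.lTensor_comp_apply, LinearMap.comp_assoc,
    leftGaloisMap_comp_mk_flip, ← LinearMap.comp_assoc,
    show TensorProduct.lift ψ ∘ₗ lTensor C (φ.flip m) = TensorProduct.lift (ψ.compl₂ (φ.flip m))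
      from TensorProduct.ext' fun _ _ => rfl]

end Coassoc

section Transport

variable {R ι N : Type*} [CommSemiring R] {M : ι → Type*} [∀ i, AddCommMonoid (M i)]
  [∀ i, Module R (M i)] [AddCommMonoid N] [Module R N]

theorem gcl_rfl {i : ι} (e : i = i) : gcl (k := R) (H := M) e = LinearMap.id := rfl

theorem gcl_gcl {i j l : ι} (e₁ : i = j) (e₂ : j = l) (x : M i) :
    gcl (k := R) e₂ (gcl (k := R) e₁ x) = gcl (k := R) (e₁.trans e₂) x := by
  subst e₁ e₂; rfl

theorem gcl_injective {i j : ι} (e : i = j) :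
    Function.Injective (gcl (k := R) (H := M) e) := by
  subst e
  exact Function.injective_id

theorem rTensor_gcl_injective {i j : ι} (e : i = j) :
    Function.Injective (rTensor N (gcl (k := R) (H := M) e)) := by
  subst e
  rw [gcl_rfl, LinearMap.rTensor_id]
  exact Function.injective_id

theorem lTensor_gcl_injective {i j : ι} (e : i = j) :
    Function.Injective (lTensor N (gcl (k := R) (H := M) e)) := by
  subst e
  rw [gcl_rfl, LinearMap.lTensor_id]
  exact Function.injective_id

end Transport

namespace GradedQuasiBialgebra

theorem gcl_mul {p p' q q' : Q} (e₁ : p = p') (e₂ : q = q') (e : G.mul p q = G.mul p' q')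
    (h : H p) (g : H q) :
    gcl (k := k) e (B.mul p q h g) = B.mul p' q' (gcl (k := k) e₁ h) (gcl (k := k) e₂ g) := by
  subst e₁ e₂; rfl

theorem mul_one_eq_gcl (p : Q) (h : H p) :
    B.mul p G.one h B.one = gcl (k := k) (G.mul_one p).symm h := by
  conv_rhs => rw [← B.mul_one' p h, gcl_gcl]
  rfl

theorem one_mul_eq_gcl (p : Q) (h : H p) :
    B.mul G.one p B.one h = gcl (k := k) (G.one_mul p).symm h := by
  conv_rhs => rw [← B.one_mul' p h, gcl_gcl]
  rfl

theorem gcl_comp_one_mul (q : Q) :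
    gcl (k := k) (G.one_mul q) ∘ₗ B.mul G.one q B.one = LinearMap.id :=
  LinearMap.ext (B.one_mul' q)

theorem gcl_comp_mul_one (p : Q) :
    gcl (k := k) (G.mul_one p) ∘ₗ (B.mul p G.one).flip B.one = LinearMap.id :=
  LinearMap.ext (B.mul_one' p)

/-- `S(h₁)(h₂ g) = ε(h) g` -/
def AntipodeMulLeft (S : ∀ p : Q, H p →ₗ[k] H (G.inv p)) : Prop :=
  ∀ (p q : Q) (h : H p) (g : H q),
    TensorProduct.lift (((B.mul (G.inv p) (G.mul p q)).comp (S p)).compl₂ ((B.mul p q).flip g))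
      (comul h)
      = gcl (k := k) (G.inv_mul_cancel p q).symm (counit (R := k) h • g)

/-- `h₁(S(h₂) g) = ε(h) g` -/
def AntipodeMulLeft' (S : ∀ p : Q, H p →ₗ[k] H (G.inv p)) : Prop :=
  ∀ (p q : Q) (h : H p) (g : H q),
    TensorProduct.lift
      ((B.mul p (G.mul (G.inv p) q)).compl₂ (((B.mul (G.inv p) q).flip g).comp (S p)))
      (comul h)
      = gcl (k := k) (G.mul_inv_cancel_left p q).symm (counit (R := k) h • g)

/-- `(g S(h₁)) h₂ = ε(h) g` -/
def AntipodeMulRight (S : ∀ p : Q, H p →ₗ[k] H (G.inv p)) : Prop :=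
  ∀ (p q : Q) (h : H p) (g : H q),
    TensorProduct.lift ((B.mul (G.mul q (G.inv p)) p).comp ((B.mul q (G.inv p) g).comp (S p)))
      (comul h)
      = gcl (k := k) (G.inv_mul_cancel_right p q).symm (counit (R := k) h • g)

/-- `(g h₁) S(h₂) = ε(h) g` -/
def AntipodeMulRight' (S : ∀ p : Q, H p →ₗ[k] H (G.inv p)) : Prop :=
  ∀ (p q : Q) (h : H p) (g : H q),
    TensorProduct.lift (((B.mul (G.mul q p) (G.inv p)).comp (B.mul q p g)).compl₂ (S p))
      (comul h)
      = gcl (k := k) (G.mul_inv_cancel p q).symm (counit (R := k) h • g)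

def IsLeftInvRightGalois
    (βs : ∀ p q : Q, H p ⊗[k] H q →ₗ[k] H (G.mul p (G.inv q)) ⊗[k] H q) : Prop :=
  ∀ (p q : Q) (x : H p ⊗[k] H q),
    βs (G.mul p q) q (rightGalois B p q x)
      = rTensor (H q) (gcl (k := k) (G.mul_inv_cancel q p).symm) x

def IsRightInvRightGalois
    (βs : ∀ p q : Q, H p ⊗[k] H q →ₗ[k] H (G.mul p (G.inv q)) ⊗[k] H q) : Prop :=
  ∀ (p q : Q) (x : H p ⊗[k] H q),
    rightGalois B (G.mul p (G.inv q)) q (βs p q x)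
      = rTensor (H q) (gcl (k := k) (G.inv_mul_cancel_right q p).symm) x

def IsLeftInvLeftGalois
    (γs : ∀ p q : Q, H p ⊗[k] H q →ₗ[k] H p ⊗[k] H (G.mul (G.inv p) q)) : Prop :=
  ∀ (p q : Q) (x : H p ⊗[k] H q),
    γs p (G.mul p q) (leftGalois B p q x)
      = lTensor (H p) (gcl (k := k) (G.inv_mul_cancel p q).symm) x

def IsRightInvLeftGalois
    (γs : ∀ p q : Q, H p ⊗[k] H q →ₗ[k] H p ⊗[k] H (G.mul (G.inv p) q)) : Prop :=
  ∀ (p q : Q) (x : H p ⊗[k] H q),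
    leftGalois B p (G.mul (G.inv p) q) (γs p q x)
      = lTensor (H p) (gcl (k := k) (G.mul_inv_cancel_left p q).symm) x

noncomputable def rightGaloisInv (S : ∀ p : Q, H p →ₗ[k] H (G.inv p)) (p q : Q) :
    H p ⊗[k] H q →ₗ[k] H (G.mul p (G.inv q)) ⊗[k] H q :=
  rightGaloisMap ((B.mul p (G.inv q)).compl₂ (S q))

noncomputable def leftGaloisInv (S : ∀ p : Q, H p →ₗ[k] H (G.inv p)) (p q : Q) :
    H p ⊗[k] H q →ₗ[k] H p ⊗[k] H (G.mul (G.inv p) q) :=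
  leftGaloisMap ((B.mul (G.inv p) q).comp (S p))

theorem isLeftInvRightGalois_rightGaloisInv_iff (hco : Coassoc (k := k) (H := H))
    (S : ∀ p : Q, H p →ₗ[k] H (G.inv p)) :
    B.IsLeftInvRightGalois (B.rightGaloisInv S) ↔ B.AntipodeMulRight' S := by
  have hcomp : ∀ p q (h : H p) (g : H q),
      B.rightGaloisInv S (G.mul p q) q (rightGalois B p q (h ⊗ₜ g))
        = rTensor (H q) (TensorProduct.lift
            (((B.mul (G.mul p q) (G.inv q)).comp (B.mul p q h)).compl₂ (S q))
              ∘ₗ comul) (comul g) :=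
    fun p q h g => rightGaloisMap_rightGaloisMap_tmul (hco q) _ _ h g
  have hiff : ∀ p q (h : H p), (∀ g : H q,
      B.rightGaloisInv S (G.mul p q) q (rightGalois B p q (h ⊗ₜ g))
        = gcl (k := k) (G.mul_inv_cancel q p).symm h ⊗ₜ g) ↔
      ∀ g : H q, TensorProduct.lift
        (((B.mul (G.mul p q) (G.inv q)).comp (B.mul p q h)).compl₂ (S q)) (comul g)
          = gcl (k := k) (G.mul_inv_cancel q p).symm (counit (R := k) g • h) := by
    intro p q h
    simp only [hcomp, map_smul]
    exact rTensor_comul_eq_tmul_iff (B.counit_comul q) (B.comul_counit q) _ _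
  constructor
  · intro hβ p q h g
    exact (hiff q p g).1 (fun h => by simpa using hβ q p (g ⊗ₜ h)) h
  · intro hS p q x
    induction x using TensorProduct.induction_on with
    | zero => simp
    | tmul h g => simpa using (hiff p q h).2 (fun g => hS q p g h) g
    | add x y hx hy => simp only [map_add, hx, hy]

theorem isRightInvRightGalois_rightGaloisInv_iff (hco : Coassoc (k := k) (H := H))
    (S : ∀ p : Q, H p →ₗ[k] H (G.inv p)) :
    B.IsRightInvRightGalois (B.rightGaloisInv S) ↔ B.AntipodeMulRight S := by
  have hcomp : ∀ p q (h : H p) (g : H q),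
      rightGalois B (G.mul p (G.inv q)) q (B.rightGaloisInv S p q (h ⊗ₜ g))
        = rTensor (H q) (TensorProduct.lift
            ((B.mul (G.mul p (G.inv q)) q).comp ((B.mul p (G.inv q) h).comp (S q)))
              ∘ₗ comul) (comul g) :=
    fun p q h g => rightGaloisMap_rightGaloisMap_tmul (hco q) _ _ h g
  have hiff : ∀ p q (h : H p), (∀ g : H q,
      rightGalois B (G.mul p (G.inv q)) q (B.rightGaloisInv S p q (h ⊗ₜ g))
        = gcl (k := k) (G.inv_mul_cancel_right q p).symm h ⊗ₜ g) ↔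
      ∀ g : H q, TensorProduct.lift
        ((B.mul (G.mul p (G.inv q)) q).comp ((B.mul p (G.inv q) h).comp (S q)))
          (comul g)
          = gcl (k := k) (G.inv_mul_cancel_right q p).symm (counit (R := k) g • h) := by
    intro p q h
    simp only [hcomp, map_smul]
    exact rTensor_comul_eq_tmul_iff (B.counit_comul q) (B.comul_counit q) _ _
  constructor
  · intro hβ p q h g
    exact (hiff q p g).1 (fun h => by simpa using hβ q p (g ⊗ₜ h)) h
  · intro hS p q x
    induction x using TensorProduct.induction_on with
    | zero => simp
    | tmul h g => simpa using (hiff p q h).2 (fun g => hS q p g h) g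
    | add x y hx hy => simp only [map_add, hx, hy]

theorem isLeftInvLeftGalois_leftGaloisInv_iff (hco : Coassoc (k := k) (H := H))
    (S : ∀ p : Q, H p →ₗ[k] H (G.inv p)) :
    B.IsLeftInvLeftGalois (B.leftGaloisInv S) ↔ B.AntipodeMulLeft S := by
  have hcomp : ∀ p q (h : H p) (g : H q),
      B.leftGaloisInv S p (G.mul p q) (leftGalois B p q (h ⊗ₜ g))
        = lTensor (H p) (TensorProduct.lift
            (((B.mul (G.inv p) (G.mul p q)).comp (S p)).compl₂ ((B.mul p q).flip g))
              ∘ₗ comul) (comul h) :=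
    fun p q h g => leftGaloisMap_leftGaloisMap_tmul (hco p) _ _ h g
  have hiff : ∀ p q (g : H q), (∀ h : H p,
      B.leftGaloisInv S p (G.mul p q) (leftGalois B p q (h ⊗ₜ g))
        = h ⊗ₜ gcl (k := k) (G.inv_mul_cancel p q).symm g) ↔
      ∀ h : H p, TensorProduct.lift
        (((B.mul (G.inv p) (G.mul p q)).comp (S p)).compl₂ ((B.mul p q).flip g))
          (comul h)
          = gcl (k := k) (G.inv_mul_cancel p q).symm (counit (R := k) h • g) := by
    intro p q g
    simp only [hcomp, map_smul]
    exact lTensor_comul_eq_tmul_iff (B.counit_comul p) (B.comul_counit p) _ _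
  constructor
  · intro hγ p q h g
    exact (hiff p q g).1 (fun h => by simpa using hγ p q (h ⊗ₜ g)) h
  · intro hS p q x
    induction x using TensorProduct.induction_on with
    | zero => simp
    | tmul h g => simpa using (hiff p q g).2 (fun h => hS p q h g) h
    | add x y hx hy => simp only [map_add, hx, hy]

theorem isRightInvLeftGalois_leftGaloisInv_iff (hco : Coassoc (k := k) (H := H))
    (S : ∀ p : Q, H p →ₗ[k] H (G.inv p)) :
    B.IsRightInvLeftGalois (B.leftGaloisInv S) ↔ B.AntipodeMulLeft' S := by
  have hcomp : ∀ p q (h : H p) (g : H q),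
      leftGalois B p (G.mul (G.inv p) q) (B.leftGaloisInv S p q (h ⊗ₜ g))
        = lTensor (H p) (TensorProduct.lift
            ((B.mul p (G.mul (G.inv p) q)).compl₂ (((B.mul (G.inv p) q).flip g).comp (S p)))
              ∘ₗ comul) (comul h) :=
    fun p q h g => leftGaloisMap_leftGaloisMap_tmul (hco p) _ _ h g
  have hiff : ∀ p q (g : H q), (∀ h : H p,
      leftGalois B p (G.mul (G.inv p) q) (B.leftGaloisInv S p q (h ⊗ₜ g))
        = h ⊗ₜ gcl (k := k) (G.mul_inv_cancel_left p q).symm g) ↔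
      ∀ h : H p, TensorProduct.lift
        ((B.mul p (G.mul (G.inv p) q)).compl₂ (((B.mul (G.inv p) q).flip g).comp (S p)))
          (comul h)
          = gcl (k := k) (G.mul_inv_cancel_left p q).symm (counit (R := k) h • g) := by
    intro p q g
    simp only [hcomp, map_smul]
    exact lTensor_comul_eq_tmul_iff (B.counit_comul p) (B.comul_counit p) _ _
  constructor
  · intro hγ p q h g
    exact (hiff p q g).1 (fun h => by simpa using hγ p q (h ⊗ₜ g)) h
  · intro hS p q x
    induction x using TensorProduct.induction_on with
    | zero => simp
    | tmul h g => simpa using (hiff p q g).2 (fun h => hS p q h g) h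
    | add x y hx hy => simp only [map_add, hx, hy]

theorem almostLeftLinear_rightGaloisInv (S : ∀ p : Q, H p →ₗ[k] H (G.inv p)) :
    AlmostLeftLinear B (B.rightGaloisInv S) := by
  intro p q h g
  have hmul : (gcl (k := k) (congrArg (G.mul p) (G.one_mul (G.inv q)))
        ∘ₗ B.mul p (G.mul G.one (G.inv q)) h) ∘ₗ (B.mul G.one (G.inv q)).compl₂ (S q) B.one
      = B.mul p (G.inv q) h ∘ₗ S q := LinearMap.ext fun b => by
    simp only [LinearMap.comp_apply, LinearMap.compl₂_apply]
    rw [one_mul_eq_gcl, B.gcl_mul rfl (G.one_mul _), gcl_gcl]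
    rfl
  rw [rightGaloisInv, rightGaloisInv, rightGaloisMap_tmul, rightGaloisMap_tmul, gcl_comp_one_mul,
    LinearMap.map_rTensor, hmul]
  rfl

theorem almostRightLinear_leftGaloisInv (S : ∀ p : Q, H p →ₗ[k] H (G.inv p)) :
    AlmostRightLinear B (B.leftGaloisInv S) := by
  intro p q h g
  have hmul : (gcl (k := k) (congrArg (G.mul · q) (G.mul_one (G.inv p)))
        ∘ₗ (B.mul (G.mul (G.inv p) G.one) q).flip g)
          ∘ₗ ((B.mul (G.inv p) G.one).comp (S p)).flip B.one
      = ((B.mul (G.inv p) q).flip g) ∘ₗ S p := LinearMap.ext fun b => by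
    simp only [LinearMap.comp_apply, LinearMap.flip_apply]
    rw [mul_one_eq_gcl, B.gcl_mul (G.mul_one _) rfl, gcl_gcl]
    rfl
  rw [leftGaloisInv, leftGaloisInv, leftGaloisMap_tmul, leftGaloisMap_tmul, gcl_comp_mul_one,
    LinearMap.map_lTensor, hmul]
  rfl

section RightGalois

variable {βs : ∀ p q : Q, H p ⊗[k] H q →ₗ[k] H (G.mul p (G.inv q)) ⊗[k] H q}

theorem rightGalois_injective (hβl : B.IsLeftInvRightGalois βs) (p q : Q) :
    Function.Injective (rightGalois B p q) := fun x y hxy =>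
  rTensor_gcl_injective (G.mul_inv_cancel q p).symm <| by rw [← hβl, ← hβl, hxy]

theorem isRightComoduleHom_of_isInvRightGalois (hco : Coassoc (k := k) (H := H))
    (hβl : B.IsLeftInvRightGalois βs) (hβr : B.IsRightInvRightGalois βs) (p q : Q) :
    IsRightComoduleHom (βs p q) :=
  (isRightComoduleHom_rightGaloisMap (hco q) _).of_comp_eq_rTensor (hβr p q)
    (Module.Flat.rTensor_preserves_injective_linearMap _ (B.rightGalois_injective hβl _ _))

variable (βs) in
noncomputable def antipodeOfRightGaloisInv (q : Q) : H q →ₗ[k] H (G.inv q) :=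
  gcl (k := k) (G.one_mul (G.inv q)) ∘ₗ (TensorProduct.rid k _).toLinearMap ∘ₗ
    lTensor _ counit ∘ₗ βs G.one q ∘ₗ TensorProduct.mk k _ (H q) B.one

theorem eq_rightGaloisInv_antipodeOfRightGaloisInv (hco : Coassoc (k := k) (H := H))
    (hβ : AlmostLeftLinear B βs) (hβl : B.IsLeftInvRightGalois βs)
    (hβr : B.IsRightInvRightGalois βs) :
    βs = B.rightGaloisInv (B.antipodeOfRightGaloisInv βs) := by
  funext p q
  refine TensorProduct.ext' fun h g => ?_
  rw [hβ, (B.isRightComoduleHom_of_isInvRightGalois hco hβl hβr G.one q).apply_tmul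
    (B.counit_comul q), gcl_comp_one_mul, LinearMap.map_rTensor, rightGaloisInv,
    rightGaloisMap_tmul]
  change rTensor (H q) _ _ = _
  congr 2
  refine LinearMap.ext fun b => ?_
  exact B.gcl_mul rfl (G.one_mul (G.inv q)) _ h _

end RightGalois

section LeftGalois

variable {γs : ∀ p q : Q, H p ⊗[k] H q →ₗ[k] H p ⊗[k] H (G.mul (G.inv p) q)}

theorem leftGalois_injective (hγl : B.IsLeftInvLeftGalois γs) (p q : Q) :
    Function.Injective (leftGalois B p q) := fun x y hxy =>
  lTensor_gcl_injective (G.inv_mul_cancel p q).symm <| by rw [← hγl, ← hγl, hxy]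

theorem isLeftComoduleHom_of_isInvLeftGalois (hco : Coassoc (k := k) (H := H))
    (hγl : B.IsLeftInvLeftGalois γs) (hγr : B.IsRightInvLeftGalois γs) (p q : Q) :
    IsLeftComoduleHom (γs p q) :=
  (isLeftComoduleHom_leftGaloisMap (hco p) _).of_comp_eq_lTensor (hγr p q)
    (Module.Flat.lTensor_preserves_injective_linearMap _ (B.leftGalois_injective hγl _ _))

variable (γs) in
noncomputable def antipodeOfLeftGaloisInv (p : Q) : H p →ₗ[k] H (G.inv p) :=
  gcl (k := k) (G.mul_one (G.inv p)) ∘ₗ (TensorProduct.lid k _).toLinearMap ∘ₗ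
    rTensor _ counit ∘ₗ γs p G.one ∘ₗ (TensorProduct.mk k (H p) _).flip B.one

theorem eq_leftGaloisInv_antipodeOfLeftGaloisInv (hco : Coassoc (k := k) (H := H))
    (hγ : AlmostRightLinear B γs) (hγl : B.IsLeftInvLeftGalois γs)
    (hγr : B.IsRightInvLeftGalois γs) :
    γs = B.leftGaloisInv (B.antipodeOfLeftGaloisInv γs) := by
  funext p q
  refine TensorProduct.ext' fun h g => ?_
  rw [hγ, (B.isLeftComoduleHom_of_isInvLeftGalois hco hγl hγr p G.one).apply_tmul
    (B.comul_counit p), gcl_comp_mul_one, LinearMap.map_lTensor, leftGaloisInv,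
    leftGaloisMap_tmul]
  change lTensor (H p) _ _ = _
  congr 2
  refine LinearMap.ext fun b => ?_
  exact B.gcl_mul (G.mul_one (G.inv p)) rfl _ _ g

end LeftGalois

theorem lift_mul_comp_comul_eq_counit_smul_one {T : ∀ p : Q, H p →ₗ[k] H (G.inv p)}
    (hT : B.AntipodeMulLeft T) (p : Q) (h : H p) :
    TensorProduct.lift ((B.mul (G.inv p) p).comp (T p)) (comul h)
      = gcl (k := k) (G.inv_mul_self p).symm (counit (R := k) h • B.one) := by
  have hmul : ((B.mul (G.inv p) (G.mul p G.one)).comp (T p)).compl₂ ((B.mul p G.one).flip B.one)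
      = ((B.mul (G.inv p) p).comp (T p)).compr₂
          (gcl (k := k) (congrArg (G.mul (G.inv p)) (G.mul_one p).symm)) := by
    refine LinearMap.ext₂ fun a b => ?_
    simp only [LinearMap.compl₂_apply, LinearMap.comp_apply, LinearMap.flip_apply,
      LinearMap.compr₂_apply]
    rw [mul_one_eq_gcl, B.gcl_mul rfl (G.mul_one p).symm]
    rfl
  have h1 := hT p G.one h B.one
  rw [hmul, TensorProduct.lift_compr₂, LinearMap.comp_apply] at h1
  rw [← gcl_gcl (G.inv_mul_cancel p G.one).symm (congrArg (G.mul (G.inv p)) (G.mul_one p)), ← h1,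
    gcl_gcl]
  rfl

theorem antipode_eq_of_antipodeMulRight'_of_antipodeMulLeft (hco : Coassoc (k := k) (H := H))
    {S T : ∀ p : Q, H p →ₗ[k] H (G.inv p)} (hS : B.AntipodeMulRight' S)
    (hT : B.AntipodeMulLeft T) : T = S := by
  funext p
  refine LinearMap.ext fun h => gcl_injective (R := k) (G.mul_inv_cancel p (G.inv p)).symm ?_
  -- `F ((a ⊗ b) ⊗ c) = (T(a) b) S(c)`, evaluated on `h₁ ⊗ h₂ ⊗ h₃` in both bracketings
  set F := TensorProduct.lift ((B.mul (G.mul (G.inv p) p) (G.inv p)).compl₂ (S p)) ∘ₗ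
    rTensor (H p) (TensorProduct.lift ((B.mul (G.inv p) p).comp (T p)))
  have hviaT : ∀ x, F (rightCoaction k (H p) (H p) x) = TensorProduct.rid k _
      (lTensor _ counit (rTensor (H p)
        (gcl (k := k) (G.mul_inv_cancel p (G.inv p)).symm ∘ₗ T p) x)) := by
    intro x
    induction x using TensorProduct.induction_on with
    | zero => simp
    | tmul a c =>
      rw [rightCoaction_tmul, ← LinearMap.comp_apply, show F ∘ₗ rTensor (H p)
        (TensorProduct.mk k (H p) (H p) a) = TensorProduct.lift
          (((B.mul (G.mul (G.inv p) p) (G.inv p)).comp (B.mul (G.inv p) p (T p a))).compl₂ (S p))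
        from TensorProduct.ext' fun _ _ => rfl, hS p (G.inv p) c (T p a)]
      simp
    | add x y hx hy => simp only [map_add, hx, hy]
  have hviaS : F (rTensor (H p) comul (comul h))
      = gcl (k := k) (G.mul_inv_cancel p (G.inv p)).symm (S p h) := by
    rw [LinearMap.comp_apply, ← LinearMap.rTensor_comp_apply, show TensorProduct.lift
        ((B.mul (G.inv p) p).comp (T p)) ∘ₗ comul = (counit (R := k)).smulRight
          (gcl (k := k) (G.inv_mul_self p).symm B.one) from LinearMap.ext fun a => by
        rw [LinearMap.comp_apply, B.lift_mul_comp_comul_eq_counit_smul_one hT, map_smul]; rfl,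
      rTensor_smulRight_counit_comul (B.counit_comul p)]
    simp only [TensorProduct.lift.tmul, LinearMap.compl₂_apply]
    refine (B.gcl_mul (G.inv_mul_self p).symm rfl
      (congrArg (G.mul · (G.inv p)) (G.inv_mul_self p).symm) B.one (S p h)).symm.trans ?_
    rw [one_mul_eq_gcl, gcl_gcl]
  rw [← hviaS, ← rightCoaction_comul (hco p), hviaT, rid_lTensor_counit_rTensor_comul
    (B.comul_counit p)]
  rfl

end GradedQuasiBialgebra

theorem gradedQuasiBialgebra_hopf_iff_galois :
    IsGradedHopfQuasigroup B ↔
      (Coassoc (k := k) (H := H) ∧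
      (∃ βs : ∀ p q : Q, H p ⊗[k] H q →ₗ[k] H (G.mul p (G.inv q)) ⊗[k] H q,
        AlmostLeftLinear B βs ∧
        (∀ (p q : Q) (x : H p ⊗[k] H q),
          βs (G.mul p q) q (rightGalois B p q x)
            = (LinearMap.rTensor (H q)
                (gcl (k := k) (G.mul_inv_cancel q p).symm)) x) ∧
        (∀ (p q : Q) (x : H p ⊗[k] H q),
          rightGalois B (G.mul p (G.inv q)) q (βs p q x)
            = (LinearMap.rTensor (H q)
                (gcl (k := k) (G.inv_mul_cancel_right q p).symm)) x)) ∧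
      (∃ γs : ∀ p q : Q, H p ⊗[k] H q →ₗ[k] H p ⊗[k] H (G.mul (G.inv p) q),
        AlmostRightLinear B γs ∧
        (∀ (p q : Q) (x : H p ⊗[k] H q),
          γs p (G.mul p q) (leftGalois B p q x)
            = (LinearMap.lTensor (H p)
                (gcl (k := k) (G.inv_mul_cancel p q).symm)) x) ∧
        (∀ (p q : Q) (x : H p ⊗[k] H q),
          leftGalois B p (G.mul (G.inv p) q) (γs p q x)
            = (LinearMap.lTensor (H p)
                (gcl (k := k) (G.mul_inv_cancel_left p q).symm)) x))) := by
  constructor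
  · rintro ⟨hco, S, hS₁, hS₂, hS₃, hS₄⟩
    exact ⟨hco,
      ⟨B.rightGaloisInv S, B.almostLeftLinear_rightGaloisInv S,
        (B.isLeftInvRightGalois_rightGaloisInv_iff hco S).2 hS₄,
        (B.isRightInvRightGalois_rightGaloisInv_iff hco S).2 hS₃⟩,
      ⟨B.leftGaloisInv S, B.almostRightLinear_leftGaloisInv S,
        (B.isLeftInvLeftGalois_leftGaloisInv_iff hco S).2 hS₁,
        (B.isRightInvLeftGalois_leftGaloisInv_iff hco S).2 hS₂⟩⟩
  · rintro ⟨hco, ⟨βs, hβ, hβl, hβr⟩, ⟨γs, hγ, hγl, hγr⟩⟩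
    have hβS := B.eq_rightGaloisInv_antipodeOfRightGaloisInv hco hβ hβl hβr
    have hγT := B.eq_leftGaloisInv_antipodeOfLeftGaloisInv hco hγ hγl hγr
    rw [hβS] at hβl hβr
    rw [hγT] at hγl hγr
    have hS₄ := (B.isLeftInvRightGalois_rightGaloisInv_iff hco _).1 hβl
    have hT₁ := (B.isLeftInvLeftGalois_leftGaloisInv_iff hco _).1 hγl
    have hTS := B.antipode_eq_of_antipodeMulRight'_of_antipodeMulLeft hco hS₄ hT₁
    rw [hTS] at hγl hγr
    exact ⟨hco, _, (B.isLeftInvLeftGalois_leftGaloisInv_iff hco _).1 hγl,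
      (B.isRightInvLeftGalois_leftGaloisInv_iff hco _).1 hγr,
      (B.isRightInvRightGalois_rightGaloisInv_iff hco _).1 hβr, hS₄⟩
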